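/- arXiv:2308.04730 — 3 statements merged into one kernel-verified Lean document; each statement's English description precedes it below -/
import Mathlib

section
/- Let h > 0, T ∈ (0,∞], n ∈ ℕ, and ρ > 0. Then the pre-history map Θ : L_{2,ρ}(−h,T;ℝ^n) → L_{2,ρ}(0,T;L₂(−h,0;ℝ^n)), f ↦ (t ↦ f_{(t)}), is a bounded linear operator with operator norm at most 1/√(2ρ); explicitly, for every f ∈ L_{2,ρ}(−h,T;ℝ^n) one has ∫₀^T (∫_{−h}^0 ‖f(t+s)‖² ds) e^{−2ρt} dt ≤ (1/(2ρ)) ∫_{−h}^T ‖f(t)‖² e^{−2ρt} dt. -/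
open MeasureTheory Set
open scoped ENNReal Pointwise

/-!
Pull the weight `e^{-2ρt}` inside the inner integral and swap the integrals (Tonelli).
Writing `e^{-2ρt} = e^{2ρs} e^{-2ρ(t+s)}`, for each fixed `s ∈ (-h,0)` the translate
`t ↦ t + s` carries `(0,T)` into `(-h,T)`, so the inner `t`-integral is at most
`e^{2ρs} ‖f‖²_{L_{2,ρ}(-h,T)}`.
It remains to integrate `e^{2ρs}` over `s < 0`, which gives `1/(2ρ)`.
-/

theorem setLIntegral_comp_add_right_le {G : Type*} [MeasurableSpace G] [AddGroup G]
    [MeasurableAdd G] {μ : Measure G} [μ.IsAddRightInvariant] {A S : Set G} {s : G}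
    (hAS : MapsTo (· + s) A S) (K : G → ℝ≥0∞) :
    ∫⁻ t in A, K (t + s) ∂μ ≤ ∫⁻ u in S, K u ∂μ :=
  calc ∫⁻ t in A, K (t + s) ∂μ ≤ ∫⁻ t in (· + s) ⁻¹' S, K (t + s) ∂μ :=
        lintegral_mono' (Measure.restrict_mono hAS.subset_preimage le_rfl) le_rfl
    _ = ∫⁻ u in S, K u ∂μ :=
        (measurePreserving_add_right μ s).setLIntegral_comp_preimage_emb
          (measurableEmbedding_addRight s) K S

theorem setLIntegral_ofReal_exp_mul_le_of_subset_Iic {I : Set ℝ} (hI : I ⊆ Iic 0) {a : ℝ}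
    (ha : 0 < a) : ∫⁻ s in I, ENNReal.ofReal (Real.exp (a * s)) ≤ ENNReal.ofReal (1 / a) :=
  calc ∫⁻ s in I, ENNReal.ofReal (Real.exp (a * s))
      ≤ ∫⁻ s in Iic 0, ENNReal.ofReal (Real.exp (a * s)) :=
        lintegral_mono' (Measure.restrict_mono hI le_rfl) le_rfl
    _ = ENNReal.ofReal (1 / a) := by
        rw [← ofReal_integral_eq_lintegral_ofReal (integrableOn_exp_mul_Iic ha 0)
          (Filter.Eventually.of_forall fun s => (Real.exp_pos _).le), integral_exp_mul_Iic ha,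
          mul_zero, Real.exp_zero]

theorem lintegral_lintegral_add_mul_exp_le {A I S : Set ℝ} (hAIS : A + I ⊆ S)
    {G : ℝ → ℝ≥0∞} (hG : AEMeasurable G (volume.restrict S)) (c : ℝ) :
    ∫⁻ t in A, (∫⁻ s in I, G (t + s)) * ENNReal.ofReal (Real.exp (c * t))
      ≤ (∫⁻ s in I, ENNReal.ofReal (Real.exp (-(c * s)))) *
          ∫⁻ u in S, G u * ENNReal.ofReal (Real.exp (c * u)) := by
  set E : ℝ → ℝ≥0∞ := fun t => ENNReal.ofReal (Real.exp (c * t))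
  set J := ∫⁻ u in S, G u * E u
  have hE_shift (t s : ℝ) : E t = ENNReal.ofReal (Real.exp (-(c * s))) * E (t + s) := by
    simp only [E, ← ENNReal.ofReal_mul (Real.exp_pos _).le, ← Real.exp_add]
    ring_nf
  have hG_add : AEMeasurable (fun p : ℝ × ℝ => G (p.1 + p.2))
      ((volume.restrict A).prod (volume.restrict I)) := by
    rw [Measure.prod_restrict]
    exact hG.comp_quasiMeasurePreserving
      ((quasiMeasurePreserving_add volume volume).restrict fun p hp => hAIS (add_mem_add hp.1 hp.2))
  calc ∫⁻ t in A, (∫⁻ s in I, G (t + s)) * E t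
      = ∫⁻ t in A, ∫⁻ s in I, G (t + s) * E t := by
        simp only [lintegral_mul_const' _ _ ENNReal.ofReal_ne_top, E]
    _ = ∫⁻ s in I, ∫⁻ t in A, G (t + s) * E t :=
        lintegral_lintegral_swap (hG_add.mul (by fun_prop))
    _ = ∫⁻ s in I,
          ENNReal.ofReal (Real.exp (-(c * s))) * ∫⁻ t in A, G (t + s) * E (t + s) := by
        refine lintegral_congr fun s => ?_
        rw [← lintegral_const_mul' _ _ ENNReal.ofReal_ne_top]
        refine lintegral_congr fun t => ?_
        rw [hE_shift t s]
        ring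
    _ ≤ ∫⁻ s in I, ENNReal.ofReal (Real.exp (-(c * s))) * J :=
        setLIntegral_mono (by fun_prop) fun s hs => mul_le_mul_right
          (setLIntegral_comp_add_right_le (fun t ht => hAIS (add_mem_add ht hs)) _) _
    _ = (∫⁻ s in I, ENNReal.ofReal (Real.exp (-(c * s)))) * J :=
        lintegral_mul_const _ (by fun_prop)

theorem stmt0_general (h : ℝ) (T : ℝ≥0∞) (n : ℕ) (ρ : ℝ) (hρ : 0 < ρ)
    (f : ℝ → EuclideanSpace ℝ (Fin n))
    (hmeas : AEStronglyMeasurable f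
      (volume.restrict {t : ℝ | -h < t ∧ ENNReal.ofReal t < T})) :
    (∫⁻ t in {t : ℝ | 0 < t ∧ ENNReal.ofReal t < T},
        (∫⁻ s in Set.Ioo (-h) (0 : ℝ), ENNReal.ofReal (‖f (t + s)‖ ^ 2)) *
          ENNReal.ofReal (Real.exp (-2 * ρ * t)))
      ≤ ENNReal.ofReal (1 / (2 * ρ)) *
        ∫⁻ t in {t : ℝ | -h < t ∧ ENNReal.ofReal t < T},
          ENNReal.ofReal (‖f t‖ ^ 2 * Real.exp (-2 * ρ * t)) := by
  have hshift : {t : ℝ | 0 < t ∧ ENNReal.ofReal t < T} + Ioo (-h) 0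
      ⊆ {t : ℝ | -h < t ∧ ENNReal.ofReal t < T} :=
    add_subset_iff.2 fun t ht s hs =>
      ⟨by linarith [ht.1, hs.1], (ENNReal.ofReal_le_ofReal (by linarith [hs.2])).trans_lt ht.2⟩
  have hexp : ∫⁻ s in Ioo (-h) 0, ENNReal.ofReal (Real.exp (-(-2 * ρ * s)))
      ≤ ENNReal.ofReal (1 / (2 * ρ)) := by
    simpa only [neg_mul, neg_neg] using
      setLIntegral_ofReal_exp_mul_le_of_subset_Iic
        (Ioo_subset_Ioc_self.trans Ioc_subset_Iic_self) (by positivity : 0 < 2 * ρ)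
  simp only [ENNReal.ofReal_mul (sq_nonneg _)]
  exact (lintegral_lintegral_add_mul_exp_le hshift
    (hmeas.norm.pow 2).aemeasurable.ennreal_ofReal _).trans (mul_le_mul_left hexp _)

/-- **Norm bound for the pre-history map** (Theorem 2.1).
For `h > 0`, `T ∈ (0,∞]`, `ρ > 0` and `f ∈ L_{2,ρ}(-h,T;ℝⁿ)`, the pre-history map
`Θ f (t) = (s ↦ f (t+s))` satisfies `‖Θ f‖_{L_{2,ρ}(0,T;L₂(-h,0))} ≤ (2ρ)^{-1/2} ‖f‖_{L_{2,ρ}(-h,T)}`,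
i.e. `∫₀ᵀ (∫_{-h}^0 ‖f(t+s)‖² ds) e^{-2ρt} dt ≤ (2ρ)⁻¹ ∫_{-h}^T ‖f(t)‖² e^{-2ρt} dt`. -/
theorem stmt0 (h : ℝ) (hh : 0 < h) (T : ℝ≥0∞) (hT : 0 < T) (n : ℕ) (ρ : ℝ) (hρ : 0 < ρ)
    (f : ℝ → EuclideanSpace ℝ (Fin n))
    (hmeas : AEStronglyMeasurable f
      (volume.restrict {t : ℝ | -h < t ∧ ENNReal.ofReal t < T}))
    (hmem : (∫⁻ t in {t : ℝ | -h < t ∧ ENNReal.ofReal t < T},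
        ENNReal.ofReal (‖f t‖ ^ 2 * Real.exp (-2 * ρ * t))) ≠ ⊤) :
    (∫⁻ t in {t : ℝ | 0 < t ∧ ENNReal.ofReal t < T},
        (∫⁻ s in Set.Ioo (-h) (0 : ℝ), ENNReal.ofReal (‖f (t + s)‖ ^ 2)) *
          ENNReal.ofReal (Real.exp (-2 * ρ * t)))
      ≤ ENNReal.ofReal (1 / (2 * ρ)) *
        ∫⁻ t in {t : ℝ | -h < t ∧ ENNReal.ofReal t < T},
          ENNReal.ofReal (‖f t‖ ^ 2 * Real.exp (-2 * ρ * t)) :=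
  stmt0_general h T n ρ hρ f hmeas
end

section
/- Let h, β > 0 and n ∈ ℕ. Let g : ℝ^n → ℝ^n and r : H¹(−h,0;ℝ^n) → [−h,0] both be Lipschitz continuous (r with respect to the H¹ norm). Then the map f : V_β → ℝ^n, f(φ) := g(φ(r(φ))) = (g ∘ ev ∘ (id × r))(φ), satisfies ‖f‖_Lip ≤ ‖g‖_Lip · (2h^{1/2} + β‖r‖_Lip + h^{−1/2}); that is, for all φ, ψ ∈ V_β one has ‖g(φ(r(φ))) − g(ψ(r(ψ)))‖ ≤ ‖g‖_Lip (2√h + β‖r‖_Lip + 1/√h) ‖φ − ψ‖_{H¹}. -/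
open MeasureTheory Set Filter

section Prelims

variable {E : Type*} [NormedAddCommGroup E] [NormedSpace ℝ E]

/-- `f` belongs to `H¹(a,b;E)` with weak derivative `f'`; `f` is identified with its
continuous representative, so that the fundamental theorem of calculus holds. -/
structure MemH1 (a b : ℝ) (f f' : ℝ → E) : Prop where
  contOn : ContinuousOn f (Set.Icc a b)
  memL2 : MeasureTheory.MemLp f 2 (MeasureTheory.volume.restrict (Set.Ioo a b))
  derivMemL2 : MeasureTheory.MemLp f' 2 (MeasureTheory.volume.restrict (Set.Ioo a b))
  ftc : ∀ t ∈ Set.Icc a b, f t = f a + ∫ s in a..t, f' s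

/-- The `H¹(a,b)`-norm of a function `f` with weak derivative `f'`. -/
noncomputable def H1norm (a b : ℝ) (f f' : ℝ → E) : ℝ :=
  Real.sqrt ((∫ t in Set.Ioo a b, ‖f t‖ ^ 2) + ∫ t in Set.Ioo a b, ‖f' t‖ ^ 2)

/-- Membership in `V_β = {ψ ∈ H¹(-h,0;E) : ‖ψ'‖_∞ ≤ β}`. -/
def VbetaMem (h β : ℝ) (ψ ψ' : ℝ → E) : Prop :=
  MemH1 (-h) 0 ψ ψ' ∧
    ∀ᵐ t ∂(MeasureTheory.volume.restrict (Set.Ioo (-h) (0 : ℝ))), ‖ψ' t‖ ≤ β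

/-- The pre-history of `x` at time `t`: `s ↦ x (t + s)`. -/
def prehist (x : ℝ → E) (t : ℝ) : ℝ → E := fun s => x (t + s)

end Prelims

/-!
Split `g (φ (r φ)) - g (ψ (r ψ))` at `φ (r ψ)`. Since `‖φ'‖ ≤ β`, the first part is at most
`β |r φ - r ψ| ≤ β ‖r‖_Lip ‖φ - ψ‖_{H¹}`. The second part is a point value of `w = φ - ψ`:
averaging `‖w t‖ ≤ ‖w s‖ + ∫ ‖w'‖` over `s ∈ (-h, 0)` and applying Cauchy–Schwarz to both
integrals gives `‖w t‖ ≤ (√h + 1/√h) ‖w‖_{H¹}`.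
-/

theorem integral_norm_le_sqrt_measureReal_mul_sqrt {α F : Type*} [MeasurableSpace α]
    [NormedAddCommGroup F] {μ : Measure α} [IsFiniteMeasure μ] {f : α → F} (hf : MemLp f 2 μ) :
    ∫ x, ‖f x‖ ∂μ ≤ √(μ.real univ) * √(∫ x, ‖f x‖ ^ 2 ∂μ) := by
  have := integral_mul_le_Lp_mul_Lq_of_nonneg Real.HolderConjugate.two_two
    (Eventually.of_forall fun x => norm_nonneg (f x)) (Eventually.of_forall fun _ => zero_le_one)
    (by simpa using hf.norm) (memLp_const (1 : ℝ))
  simpa only [mul_one, Real.one_rpow, integral_const, smul_eq_mul, Real.rpow_two, one_pow,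
    one_mul, ← Real.sqrt_eq_rpow, mul_comm] using this

section H1

variable {E : Type*} [NormedAddCommGroup E] {a b s t : ℝ} {f f' g g' : ℝ → E}

theorem H1norm_nonneg (a b : ℝ) (f f' : ℝ → E) : 0 ≤ H1norm a b f f' :=
  Real.sqrt_nonneg _

theorem sqrt_integral_norm_sq_le_H1norm :
    √(∫ t in Ioo a b, ‖f t‖ ^ 2) ≤ H1norm a b f f' :=
  Real.sqrt_le_sqrt (le_add_of_nonneg_right (integral_nonneg fun _ => sq_nonneg _))

theorem sqrt_integral_norm_deriv_sq_le_H1norm :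
    √(∫ t in Ioo a b, ‖f' t‖ ^ 2) ≤ H1norm a b f f' :=
  Real.sqrt_le_sqrt (le_add_of_nonneg_left (integral_nonneg fun _ => sq_nonneg _))

variable [NormedSpace ℝ E]

namespace MemH1

theorem integrableOn (hf : MemH1 a b f f') : IntegrableOn f (Ioo a b) :=
  hf.memL2.integrable one_le_two

theorem integrableOn_deriv (hf : MemH1 a b f f') : IntegrableOn f' (Ioo a b) :=
  hf.derivMemL2.integrable one_le_two

theorem intervalIntegrable_deriv (hf : MemH1 a b f f') (hs : s ∈ Icc a b) (ht : t ∈ Icc a b) :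
    IntervalIntegrable f' volume s t :=
  (((integrableOn_Icc_iff_integrableOn_Ioo).2 hf.integrableOn_deriv).mono_set
    (uIcc_subset_Icc hs ht)).intervalIntegrable

theorem sub_eq_intervalIntegral (hf : MemH1 a b f f') (hs : s ∈ Icc a b) (ht : t ∈ Icc a b) :
    f t - f s = ∫ u in s..t, f' u := by
  have ha : a ∈ Icc a b := ⟨le_rfl, hs.1.trans hs.2⟩
  rw [hf.ftc t ht, hf.ftc s hs, add_sub_add_left_eq_sub,
    intervalIntegral.integral_interval_sub_left (hf.intervalIntegrable_deriv ha ht)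
      (hf.intervalIntegrable_deriv ha hs)]

protected theorem sub (hf : MemH1 a b f f') (hg : MemH1 a b g g') :
    MemH1 a b (f - g) (f' - g') := by
  refine ⟨hf.contOn.sub hg.contOn, hf.memL2.sub hg.memL2, hf.derivMemL2.sub hg.derivMemL2,
    fun t ht => ?_⟩
  have ha : a ∈ Icc a b := ⟨le_rfl, ht.1.trans ht.2⟩
  simp only [Pi.sub_apply]
  rw [hf.ftc t ht, hg.ftc t ht, intervalIntegral.integral_sub (hf.intervalIntegrable_deriv ha ht)
    (hg.intervalIntegrable_deriv ha ht)]
  abel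

theorem norm_sub_le_integral_norm_deriv (hf : MemH1 a b f f') (hs : s ∈ Icc a b)
    (ht : t ∈ Icc a b) : ‖f t - f s‖ ≤ ∫ u in Ioo a b, ‖f' u‖ := by
  rw [hf.sub_eq_intervalIntegral hs ht]
  have hsub : uIoc s t ⊆ Ioc a b := Ioc_subset_Ioc (le_min hs.1 ht.1) (max_le hs.2 ht.2)
  calc ‖∫ u in s..t, f' u‖ ≤ ∫ u in uIoc s t, ‖f' u‖ :=
        intervalIntegral.norm_integral_le_integral_norm_uIoc
    _ ≤ ∫ u in Ioo a b, ‖f' u‖ :=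
        setIntegral_mono_set hf.integrableOn_deriv.norm (.of_forall fun _ => norm_nonneg _)
          (hsub.eventuallyLE.trans Ioo_ae_eq_Ioc.symm.le)

theorem norm_sub_le_of_ae_norm_deriv_le {C : ℝ} (hf : MemH1 a b f f')
    (hC : ∀ᵐ u ∂volume.restrict (Ioo a b), ‖f' u‖ ≤ C) (hs : s ∈ Icc a b) (ht : t ∈ Icc a b) :
    ‖f t - f s‖ ≤ C * |t - s| := by
  rw [hf.sub_eq_intervalIntegral hs ht]
  refine intervalIntegral.norm_integral_le_of_norm_le_const_ae ?_
  rw [Measure.restrict_congr_set Ioo_ae_eq_Ioc, ae_restrict_iff' measurableSet_Ioc] at hC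
  filter_upwards [hC] with u hu hust
  exact hu (Ioc_subset_Ioc (le_min hs.1 ht.1) (max_le hs.2 ht.2) hust)

theorem norm_le_H1norm (hab : a < b) (hf : MemH1 a b f f') (ht : t ∈ Icc a b) :
    ‖f t‖ ≤ (√(b - a) + 1 / √(b - a)) * H1norm a b f f' := by
  set N := H1norm a b f f'
  set σ := √(b - a)
  have hσ : 0 < σ := Real.sqrt_pos.2 (sub_pos.2 hab)
  have hσsq : σ ^ 2 = b - a := Real.sq_sqrt (sub_pos.2 hab).le
  have hvol : volume.real (Ioo a b) = b - a := Real.volume_real_Ioo_of_le hab.le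
  have hCS {u : ℝ → E} (hu : MemLp u 2 (volume.restrict (Ioo a b))) :
      ∫ x in Ioo a b, ‖u x‖ ≤ σ * √(∫ x in Ioo a b, ‖u x‖ ^ 2) := by
    simpa [hvol] using integral_norm_le_sqrt_measureReal_mul_sqrt hu
  have hpoint : ∀ s ∈ Ioo a b, ‖f t‖ ≤ ‖f s‖ + ∫ u in Ioo a b, ‖f' u‖ := fun s hs =>
    (norm_le_insert' (f t) (f s)).trans
      (add_le_add le_rfl (hf.norm_sub_le_integral_norm_deriv (Ioo_subset_Icc_self hs) ht))
  have havg : (b - a) * ‖f t‖ ≤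
      (∫ s in Ioo a b, ‖f s‖) + (b - a) * ∫ u in Ioo a b, ‖f' u‖ := by
    have := setIntegral_mono_on (integrableOn_const (by simp))
      (hf.integrableOn.norm.add (integrableOn_const (by simp))) measurableSet_Ioo hpoint
    simp only [Pi.add_apply] at this
    rwa [setIntegral_const, integral_add hf.integrableOn.norm (integrable_const _),
      setIntegral_const, hvol, smul_eq_mul, smul_eq_mul] at this
  have h1 : ∫ x in Ioo a b, ‖f x‖ ≤ σ * N := (hCS hf.memL2).trans
    (mul_le_mul_of_nonneg_left sqrt_integral_norm_sq_le_H1norm hσ.le)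
  have h2 : ∫ x in Ioo a b, ‖f' x‖ ≤ σ * N := (hCS hf.derivMemL2).trans
    (mul_le_mul_of_nonneg_left sqrt_integral_norm_deriv_sq_le_H1norm hσ.le)
  refine le_of_mul_le_mul_left ?_ (pow_pos hσ 2)
  calc σ ^ 2 * ‖f t‖ ≤ σ * N + σ ^ 2 * (σ * N) := by
        rw [hσsq]; nlinarith
    _ = σ ^ 2 * ((σ + 1 / σ) * N) := by field_simp; ring

end MemH1

end H1

theorem stmt2_general (h β : ℝ) (hh : 0 < h) (hβ : 0 < β) (n : ℕ)
    (g : EuclideanSpace ℝ (Fin n) → EuclideanSpace ℝ (Fin n))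
    (Lg : ℝ) (hLg : 0 ≤ Lg) (hg : ∀ x y, ‖g x - g y‖ ≤ Lg * ‖x - y‖)
    (r : (ℝ → EuclideanSpace ℝ (Fin n)) → ℝ)
    (hr_range : ∀ ψ, r ψ ∈ Set.Icc (-h) 0)
    (Lr : ℝ)
    (hr : ∀ φ φd ψ ψd, MemH1 (-h) 0 φ φd → MemH1 (-h) 0 ψ ψd →
      |r φ - r ψ| ≤ Lr * H1norm (-h) 0 (φ - ψ) (φd - ψd)) :
    ∀ φ φd ψ ψd, VbetaMem h β φ φd → VbetaMem h β ψ ψd →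
      ‖g (φ (r φ)) - g (ψ (r ψ))‖ ≤
        Lg * (2 * Real.sqrt h + β * Lr + 1 / Real.sqrt h) *
          H1norm (-h) 0 (φ - ψ) (φd - ψd) := by
  rintro φ φd ψ ψd ⟨hφ, hφd⟩ ⟨hψ, -⟩
  set N := H1norm (-h) 0 (φ - ψ) (φd - ψd)
  have hdelay : ‖φ (r φ) - φ (r ψ)‖ ≤ β * (Lr * N) :=
    (hφ.norm_sub_le_of_ae_norm_deriv_le hφd (hr_range ψ) (hr_range φ)).trans
      (mul_le_mul_of_nonneg_left (hr φ φd ψ ψd hφ hψ) hβ.le)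
  have hvalue : ‖φ (r ψ) - ψ (r ψ)‖ ≤ (√h + 1 / √h) * N := by
    simpa using (hφ.sub hψ).norm_le_H1norm (by linarith) (hr_range ψ)
  have hN : 0 ≤ √h * N := mul_nonneg (Real.sqrt_nonneg h) (H1norm_nonneg _ _ _ _)
  calc ‖g (φ (r φ)) - g (ψ (r ψ))‖ ≤ Lg * ‖φ (r φ) - ψ (r ψ)‖ := hg _ _
    _ ≤ Lg * (β * (Lr * N) + (√h + 1 / √h) * N) := by
        gcongr
        exact (norm_sub_le_norm_sub_add_norm_sub _ _ _).trans (add_le_add hdelay hvalue)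
    _ ≤ Lg * (2 * √h + β * Lr + 1 / √h) * N := by
        rw [mul_assoc]
        gcongr
        linear_combination hN

/-- **Key estimate** (Theorem 3.2). If `g : ℝⁿ → ℝⁿ` and the delay functional
`r : H¹(-h,0;ℝⁿ) → [-h,0]` are Lipschitz continuous, then
`f = g ∘ ev ∘ (id × r)`, i.e. `φ ↦ g (φ (r φ))`, is Lipschitz continuous on `V_β` with
`‖f‖_Lip ≤ ‖g‖_Lip (2 h^{1/2} + β ‖r‖_Lip + h^{-1/2})`. -/
theorem stmt2 (h β : ℝ) (hh : 0 < h) (hβ : 0 < β) (n : ℕ)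
    (g : EuclideanSpace ℝ (Fin n) → EuclideanSpace ℝ (Fin n))
    (Lg : ℝ) (hLg : 0 ≤ Lg) (hg : ∀ x y, ‖g x - g y‖ ≤ Lg * ‖x - y‖)
    (r : (ℝ → EuclideanSpace ℝ (Fin n)) → ℝ)
    (hr_range : ∀ ψ, r ψ ∈ Set.Icc (-h) 0)
    (Lr : ℝ) (hLr : 0 ≤ Lr)
    (hr : ∀ φ φd ψ ψd, MemH1 (-h) 0 φ φd → MemH1 (-h) 0 ψ ψd →
      |r φ - r ψ| ≤ Lr * H1norm (-h) 0 (φ - ψ) (φd - ψd)) :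
    ∀ φ φd ψ ψd, VbetaMem h β φ φd → VbetaMem h β ψ ψd →
      ‖g (φ (r φ)) - g (ψ (r ψ))‖ ≤
        Lg * (2 * Real.sqrt h + β * Lr + 1 / Real.sqrt h) *
          H1norm (-h) 0 (φ - ψ) (φd - ψd) :=
  stmt2_general h β hh hβ n g Lg hLg hg r hr_range Lr hr
end

section
/- (Sharpness of the Lipschitz assumption on the pre-history.) Let h = 2 and define φ : [−2,0] → ℝ by φ(t) = −1 for −2 ≤ t < −1, φ(t) = 3(t+1)^{2/3} − 1 for −1 ≤ t ≤ −(√27−1)/√27, and φ(t) = (√27/(√27−1)) t + 1 for −(√27−1)/√27 < t ≤ 0. Then: (i) φ ∈ H¹(−2,0) but φ is not Lipschitz continuous (its derivative blows up at t = −1); (ii) there exists T > 0 such that the two distinct functions x₁(t) = 1 + t and x₂(t) = 1 + t − t³ on [0,T], each extended by φ on [−2,0], both belong to H¹(−2,T) and both satisfy the state-dependent delay equation x′(t) = −x(t − min{|x(t)|, 2}) for t ∈ (0,T) with pre-history x_{(0)} = φ. In particular, uniqueness of solutions fails for this H¹ pre-history. -/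
open MeasureTheory Set Filter

/-- The non-Lipschitz pre-history of Example 4.3. -/
noncomputable def phi7 (t : ℝ) : ℝ :=
  if t < -1 then -1
  else if t ≤ -(Real.sqrt 27 - 1) / Real.sqrt 27 then 3 * (t + 1) ^ ((2 : ℝ) / 3) - 1
  else Real.sqrt 27 / (Real.sqrt 27 - 1) * t + 1

/-- The first solution: `φ` extended by `1 + t`. -/
noncomputable def x71 : ℝ → ℝ := fun t => if t ≤ 0 then phi7 t else 1 + t

/-- The second solution: `φ` extended by `1 + t - t³`. -/
noncomputable def x72 : ℝ → ℝ := fun t => if t ≤ 0 then phi7 t else 1 + t - t ^ 3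

/-!
Near `t = -1` the pre-history is `3 (t + 1) ^ (2/3) - 1`, whose derivative `2 (t + 1) ^ (-1/3)`
is square integrable but unbounded; the three pieces of `φ` and their continuations on `[0, T]`
are glued into `H¹` functions with the fundamental theorem of calculus. While both candidates
stay in `(0, 2)` the delay is `|x t|`: for `x₁ = 1 + t` it sends `t` to the constant `-1`, where
`φ = -1 = -x₁'`, and for `x₂ = 1 + t - t³` it sends `t` to `t³ - 1`, where the cusp gives
`φ (t³ - 1) = 3 t² - 1 = -x₂' t`.
-/

open Topology

section H1

variable {E : Type*} [NormedAddCommGroup E] {a b c : ℝ}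

theorem ContinuousOn.memLp_restrict_Ioo {f : ℝ → E} (hf : ContinuousOn f (Icc a b))
    (p : ENNReal) : MemLp f p (volume.restrict (Ioo a b)) := by
  obtain ⟨C, hC⟩ := isCompact_Icc.exists_bound_of_continuousOn hf
  rw [restrict_Ioo_eq_restrict_Icc]
  exact .of_bound (hf.aestronglyMeasurable measurableSet_Icc) C
    ((ae_restrict_iff' measurableSet_Icc).2 (ae_of_all _ hC))

theorem MeasureTheory.MemLp.ite_le_of_restrict_Ioo {p : ENNReal} {u v : ℝ → E}
    (hu : MemLp u p (volume.restrict (Ioo a b))) (hv : MemLp v p (volume.restrict (Ioo b c))) :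
    MemLp (fun t => if t ≤ b then u t else v t) p (volume.restrict (Ioo a c)) := by
  refine MemLp.piecewise (s := Iic b) measurableSet_Iic ?_ ?_
  · rw [restrict_Ioo_eq_restrict_Icc] at hu
    refine hu.mono_measure ?_
    rw [Measure.restrict_restrict measurableSet_Iic]
    exact Measure.restrict_mono_set _ fun t ht => ⟨ht.2.1.le, ht.1⟩
  · refine hv.mono_measure ?_
    rw [Measure.restrict_restrict measurableSet_Iic.compl]
    exact Measure.restrict_mono_set _ fun t ht => ⟨not_le.1 ht.1, ht.2.2⟩

variable [NormedSpace ℝ E]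

theorem MemH1.intervalIntegrable_deriv_s7 {f f' : ℝ → E} (hf : MemH1 a b f f') (hab : a ≤ b) :
    IntervalIntegrable f' volume a b :=
  (intervalIntegrable_iff_integrableOn_Ioo_of_le hab).2 (hf.derivMemL2.integrable one_le_two)

theorem memH1_of_hasDerivAt [CompleteSpace E] {f f' : ℝ → E} (hf : ContinuousOn f (Icc a b))
    (hderiv : ∀ t ∈ Ioo a b, HasDerivAt f (f' t) t)
    (hf' : MemLp f' 2 (volume.restrict (Ioo a b))) : MemH1 a b f f' := by
  refine ⟨hf, hf.memLp_restrict_Ioo 2, hf', fun t ht => ?_⟩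
  have hint : IntervalIntegrable f' volume a t :=
    (intervalIntegrable_iff_integrableOn_Ioo_of_le ht.1).2
      (IntegrableOn.mono_set (hf'.integrable one_le_two) (Ioo_subset_Ioo_right ht.2))
  rw [intervalIntegral.integral_eq_sub_of_hasDerivAt_of_le ht.1
    (hf.mono (Icc_subset_Icc_right ht.2))
    (fun s hs => hderiv s ⟨hs.1, hs.2.trans_le ht.2⟩) hint, add_sub_cancel]

theorem MemH1.glue {f f' g g' : ℝ → E} (hf : MemH1 a b f f') (hg : MemH1 b c g g')
    (hab : a ≤ b) (hfg : f b = g b) :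
    MemH1 a c (fun t => if t ≤ b then f t else g t) (fun t => if t ≤ b then f' t else g' t) := by
  refine ⟨?_, hf.memL2.ite_le_of_restrict_Ioo hg.memL2,
    hf.derivMemL2.ite_le_of_restrict_Ioo hg.derivMemL2, fun t ht => ?_⟩
  · refine ContinuousOn.mono ?_ (Icc_subset_Icc_union_Icc (b := b))
    refine ContinuousOn.union_of_isClosed ?_ ?_ isClosed_Icc isClosed_Icc
    · exact hf.contOn.congr fun t ht => if_pos ht.2
    · refine hg.contOn.congr fun t ht => ?_
      rcases ht.1.eq_or_lt with rfl | hbt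
      · simp [hfg]
      · simp [not_le.2 hbt]
  have hf'_eq : EqOn (fun s => if s ≤ b then f' s else g' s) f' (Icc a b) :=
    fun s hs => if_pos hs.2
  simp only [if_pos hab]
  rcases le_or_gt t b with htb | hbt
  · rw [if_pos htb, intervalIntegral.integral_congr
      (hf'_eq.mono (uIcc_of_le ht.1 ▸ Icc_subset_Icc_right htb)), hf.ftc t ⟨ht.1, htb⟩]
  have hg'_eq : EqOn (fun s => if s ≤ b then f' s else g' s) g' (uIoc b t) := fun s hs => by
    rw [uIoc_of_le hbt.le] at hs
    exact if_neg (not_le.2 hs.1)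
  have hint_ab : IntervalIntegrable (fun s => if s ≤ b then f' s else g' s) volume a b :=
    (hf.intervalIntegrable_deriv_s7 hab).congr fun s hs =>
      (hf'_eq (Ioc_subset_Icc_self ((uIoc_of_le hab) ▸ hs))).symm
  have hint_bt : IntervalIntegrable (fun s => if s ≤ b then f' s else g' s) volume b t :=
    ((hg.intervalIntegrable_deriv_s7 (hbt.le.trans ht.2)).mono_set (by
      rw [uIcc_of_le hbt.le, uIcc_of_le (hbt.le.trans ht.2)]
      exact Icc_subset_Icc_right ht.2)).congr hg'_eq.symm
  rw [if_neg (not_le.2 hbt), ← intervalIntegral.integral_add_adjacent_intervals hint_ab hint_bt,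
    intervalIntegral.integral_congr (hf'_eq.mono (uIcc_of_le hab).subset),
    intervalIntegral.integral_congr_ae (ae_of_all _ fun s hs => hg'_eq hs), ← add_assoc,
    ← hf.ftc b ⟨hab, le_rfl⟩, hfg, ← hg.ftc t ⟨hbt.le, ht.2⟩]

end H1

theorem memLp_two_rpow_add_Ioo {r : ℝ} (hr : -1 / 2 < r) (c d : ℝ) :
    MemLp (fun t => (t + c) ^ r) 2 (volume.restrict (Ioo (-c) d)) := by
  have hmeas : Measurable fun t : ℝ => (t + c) ^ r := by fun_prop
  rw [memLp_two_iff_integrable_sq hmeas.aestronglyMeasurable]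
  have hint : IntegrableOn (fun t => (t + c) ^ (2 * r)) (Ioo (-c) d) := by
    have h := (intervalIntegral.intervalIntegrable_rpow' (r := 2 * r) (by linarith)
      (a := 0) (b := d + c)).comp_add_right c
    rw [zero_sub, add_sub_cancel_right, intervalIntegrable_iff] at h
    exact h.mono_set (Ioo_subset_Ioc_self.trans Ioc_subset_uIoc)
  refine hint.congr_fun (fun t ht => ?_) measurableSet_Ioo
  have hpos : 0 ≤ t + c := by linarith [ht.1]
  rw [← Real.rpow_natCast, ← Real.rpow_mul hpos, Nat.cast_ofNat, mul_comm]

noncomputable def phi7Break : ℝ := -(√27 - 1) / √27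

noncomputable def phi7Slope : ℝ := √27 / (√27 - 1)

theorem one_lt_sqrt_27 : 1 < √27 := by
  rw [Real.lt_sqrt zero_le_one]; norm_num

theorem inv_sqrt_27_le_one_eighth : 1 / 8 ≤ (√27)⁻¹ := by
  rw [one_div, inv_le_inv₀ (by norm_num) (by positivity), Real.sqrt_le_left (by norm_num)]
  norm_num

theorem inv_sqrt_27_rpow : (√27)⁻¹ ^ ((2 : ℝ) / 3) = 1 / 3 := by
  have h27 : √27 = (3 : ℝ) ^ ((3 : ℝ) / 2) := by
    rw [show (27 : ℝ) = 3 ^ (3 : ℝ) by norm_num, Real.sqrt_eq_rpow, ← Real.rpow_mul (by norm_num)]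
    norm_num
  rw [h27, ← Real.rpow_neg (by norm_num), ← Real.rpow_mul (by norm_num)]
  norm_num

theorem phi7Break_add_one : phi7Break + 1 = (√27)⁻¹ := by
  have : √27 ≠ 0 := by linarith [one_lt_sqrt_27]
  rw [phi7Break]
  field_simp
  ring

theorem phi7Break_mem_Ioo : phi7Break ∈ Ioo (-1) 0 := by
  have h := phi7Break_add_one
  have : (√27)⁻¹ < 1 := inv_lt_one_of_one_lt₀ one_lt_sqrt_27
  constructor <;> linarith [inv_sqrt_27_le_one_eighth]

theorem phi7Slope_mul_phi7Break : phi7Slope * phi7Break = -1 := by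
  have : √27 - 1 ≠ 0 := by linarith [one_lt_sqrt_27]
  have : √27 ≠ 0 := by linarith [one_lt_sqrt_27]
  rw [phi7Slope, phi7Break]
  field_simp

theorem phi7_of_mem_Icc {t : ℝ} (ht : t ∈ Icc (-1) phi7Break) :
    phi7 t = 3 * (t + 1) ^ ((2 : ℝ) / 3) - 1 := by
  rw [phi7, if_neg (not_lt.2 ht.1), if_pos (show t ≤ -(√27 - 1) / √27 from ht.2)]

theorem phi7_neg_one : phi7 (-1) = -1 := by
  rw [phi7_of_mem_Icc ⟨le_rfl, phi7Break_mem_Ioo.1.le⟩]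
  norm_num

-- `phi7` branches on `t < -1`; this is the `≤`-nesting that `MemH1.glue` produces.
theorem phi7_eq_ite : phi7 = fun t => if t ≤ -1 then -1
    else if t ≤ phi7Break then 3 * (t + 1) ^ ((2 : ℝ) / 3) - 1 else phi7Slope * t + 1 := by
  funext t
  rcases lt_or_ge t (-1) with ht | ht
  · simp [phi7, ht, ht.le]
  rcases ht.eq_or_lt with rfl | ht
  · simp [phi7_neg_one]
  · simp [phi7, not_lt.2 ht.le, not_le.2 ht, phi7Break, phi7Slope]

theorem phi7_zero : phi7 0 = 1 := by
  simp [phi7_eq_ite, not_le.2 phi7Break_mem_Ioo.2]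

noncomputable def phi7Deriv (t : ℝ) : ℝ :=
  if t ≤ -1 then 0 else if t ≤ phi7Break then 2 * (t + 1) ^ (-(1 : ℝ) / 3) else phi7Slope

theorem hasDerivAt_phi7_mid {t : ℝ} (ht : -1 < t) :
    HasDerivAt (fun t => 3 * (t + 1) ^ ((2 : ℝ) / 3) - 1) (2 * (t + 1) ^ (-(1 : ℝ) / 3)) t := by
  refine ((((hasDerivAt_id' t).add_const 1).rpow_const (p := (2 : ℝ) / 3)
    (Or.inl (by linarith))).const_mul 3 |>.sub_const 1).congr_deriv ?_
  rw [show (2 : ℝ) / 3 - 1 = -1 / 3 by norm_num]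
  ring

theorem memH1_phi7 : MemH1 (-2) 0 phi7 phi7Deriv := by
  have hconst : MemH1 (-2) (-1) (fun _ => (-1 : ℝ)) fun _ => 0 :=
    memH1_of_hasDerivAt continuousOn_const (fun t _ => hasDerivAt_const t _) (memLp_const 0)
  have hmid : MemH1 (-1) phi7Break (fun t => 3 * (t + 1) ^ ((2 : ℝ) / 3) - 1)
      fun t => 2 * (t + 1) ^ (-(1 : ℝ) / 3) :=
    memH1_of_hasDerivAt (by fun_prop (disch := norm_num))
      (fun t ht => hasDerivAt_phi7_mid ht.1)
      ((memLp_two_rpow_add_Ioo (by norm_num) 1 phi7Break).const_mul 2)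
  have hlin : MemH1 phi7Break 0 (fun t => phi7Slope * t + 1) fun _ => phi7Slope :=
    memH1_of_hasDerivAt (by fun_prop)
      (fun t _ => by simpa using ((hasDerivAt_id t).const_mul phi7Slope).add_const 1)
      (memLp_const _)
  rw [phi7_eq_ite]
  refine hconst.glue (hmid.glue hlin phi7Break_mem_Ioo.1.le ?_) (by norm_num) ?_
  · rw [phi7Break_add_one, inv_sqrt_27_rpow, phi7Slope_mul_phi7Break]
    norm_num
  · simp [phi7Break_mem_Ioo.1.le]

theorem memH1_x71 : MemH1 (-2) (1 / 2) x71 fun t => if t ≤ 0 then phi7Deriv t else 1 :=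
  memH1_phi7.glue (memH1_of_hasDerivAt (by fun_prop)
    (fun t _ => by simpa using (hasDerivAt_id t).const_add 1) (memLp_const 1))
    (by norm_num) (by simp [phi7_zero])

theorem memH1_x72 :
    MemH1 (-2) (1 / 2) x72 fun t => if t ≤ 0 then phi7Deriv t else 1 - 3 * t ^ 2 :=
  memH1_phi7.glue (memH1_of_hasDerivAt (by fun_prop)
    (fun t _ => ((hasDerivAt_id' t).const_add 1).sub (hasDerivAt_pow 3 t) |>.congr_deriv
      (by norm_num))
    ((by fun_prop : Continuous fun t : ℝ => 1 - 3 * t ^ 2).continuousOn.memLp_restrict_Ioo 2))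
    (by norm_num) (by simp [phi7_zero])

theorem not_exists_rpow_le_mul {α c δ : ℝ} (hα : α < 1) (hc : 0 < c) (hδ : 0 < δ) :
    ¬ ∃ K : ℝ, ∀ ε ∈ Ioc 0 δ, c * ε ^ α ≤ K * ε := by
  rintro ⟨K, hK⟩
  have hlarge : ∀ᶠ ε in 𝓝[>] (0 : ℝ), K / c < ε ^ (α - 1) ∧ ε ∈ Ioc 0 δ :=
    ((tendsto_rpow_neg_nhdsGT_zero (by linarith)).eventually_gt_atTop _).and
      (Ioc_mem_nhdsGT hδ)
  obtain ⟨ε, hεK, hε⟩ := hlarge.exists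
  have hsplit : ε ^ α = ε ^ (α - 1) * ε := by
    rw [← Real.rpow_add_one hε.1.ne', sub_add_cancel]
  have := hK ε hε
  rw [div_lt_iff₀ hc] at hεK
  nlinarith [hε.1]

theorem phi7_neg_one_add {ε : ℝ} (hε : ε ∈ Ioc 0 (√27)⁻¹) :
    phi7 (-1 + ε) = 3 * ε ^ ((2 : ℝ) / 3) - 1 := by
  rw [phi7_of_mem_Icc ⟨by linarith [hε.1], by linarith [hε.2, phi7Break_add_one]⟩,
    neg_add_cancel_comm]

theorem phi7_not_lipschitz : ¬ ∃ K : ℝ, ∀ s ∈ Icc (-2 : ℝ) 0, ∀ t ∈ Icc (-2 : ℝ) 0,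
    |phi7 s - phi7 t| ≤ K * |s - t| := by
  rintro ⟨K, hK⟩
  refine not_exists_rpow_le_mul (α := 2 / 3) (by norm_num) (by norm_num : (0 : ℝ) < 3)
    (by positivity : 0 < (√27)⁻¹) ⟨K, fun ε hε => ?_⟩
  have hε1 : ε ≤ 1 := hε.2.trans (inv_le_one_of_one_le₀ one_lt_sqrt_27.le)
  have h := hK (-1 + ε) ⟨by linarith [hε.1], by linarith⟩ (-1) ⟨by norm_num, by norm_num⟩
  rwa [phi7_neg_one_add hε, phi7_neg_one, sub_neg_eq_add, sub_add_cancel, sub_neg_eq_add,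
    neg_add_cancel_comm, abs_of_pos (mul_pos three_pos (Real.rpow_pos_of_pos hε.1 _)),
    abs_of_pos hε.1] at h

theorem x71_delayed {t : ℝ} (ht : t ∈ Ioo (0 : ℝ) (1 / 2)) :
    x71 (t - min |x71 t| 2) = -1 := by
  have hx : x71 t = 1 + t := if_neg (not_le.2 ht.1)
  rw [hx, abs_of_pos (by linarith [ht.1]), min_eq_left (by linarith [ht.2]),
    sub_add_cancel_right, x71, if_pos (by norm_num), phi7_neg_one]

theorem x72_delayed {t : ℝ} (ht : t ∈ Ioo (0 : ℝ) (1 / 2)) :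
    x72 (t - min |x72 t| 2) = 3 * t ^ 2 - 1 := by
  obtain ⟨ht0, ht1⟩ := ht
  have hcube : t ^ 3 < 1 / 8 := by
    calc t ^ 3 < (1 / 2) ^ 3 := by gcongr
      _ = 1 / 8 := by norm_num
  have hcube0 : 0 < t ^ 3 := by positivity
  have hx : x72 t = 1 + t - t ^ 3 := if_neg (not_le.2 ht0)
  have hdelay : t - (1 + t - t ^ 3) = t ^ 3 - 1 := by ring
  rw [hx, abs_of_pos (by linarith), min_eq_left (by linarith), hdelay, x72,
    if_pos (by linarith), phi7_of_mem_Icc ⟨by linarith, by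
      linarith [phi7Break_add_one, inv_sqrt_27_le_one_eighth]⟩, sub_add_cancel,
    ← Real.rpow_natCast, ← Real.rpow_mul ht0.le]
  norm_num

/-- **Sharpness of the Lipschitz assumption on the pre-history** (Example 4.3).
The pre-history `phi7` belongs to `H¹(-2,0)` but is not Lipschitz continuous, and for
some `T > 0` the two functions `x71`, `x72` (which differ on `(0,T)` and both extend
`phi7`) both solve `x'(t) = -x(t - min {|x(t)|, 2})` on `(0,T)` with pre-history
`x_{(0)} = phi7`; so uniqueness fails for this `H¹` pre-history. -/
theorem stmt7 :
    (∃ φd : ℝ → ℝ, MemH1 (-2) 0 phi7 φd) ∧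
    (¬ ∃ K : ℝ, ∀ s ∈ Set.Icc (-2 : ℝ) 0, ∀ t ∈ Set.Icc (-2 : ℝ) 0,
      |phi7 s - phi7 t| ≤ K * |s - t|) ∧
    (∃ T : ℝ, 0 < T ∧
      (∃ d₁ : ℝ → ℝ, MemH1 (-2) T x71 d₁ ∧
        ∀ t ∈ Set.Ioo (0 : ℝ) T, d₁ t = -x71 (t - min |x71 t| 2)) ∧
      (∃ d₂ : ℝ → ℝ, MemH1 (-2) T x72 d₂ ∧
        ∀ t ∈ Set.Ioo (0 : ℝ) T, d₂ t = -x72 (t - min |x72 t| 2)) ∧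
      ∃ t ∈ Set.Ioo (0 : ℝ) T, x71 t ≠ x72 t) := by
  refine ⟨⟨_, memH1_phi7⟩, phi7_not_lipschitz, 1 / 2, by norm_num,
    ⟨_, memH1_x71, fun t ht => ?_⟩, ⟨_, memH1_x72, fun t ht => ?_⟩, 1 / 4, by norm_num, ?_⟩
  · rw [if_neg (not_le.2 ht.1), x71_delayed ht, neg_neg]
  · rw [if_neg (not_le.2 ht.1), x72_delayed ht, neg_sub]
  · norm_num [x71, x72]
end
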